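/- Let φ : ℍⁿ → ℝ be H-convex and suppose there exists K' > 1 such that for all ξ ∈ ℍⁿ, p ∈ ∂_Hφ(ξ), s > 0: if ξ₁ ∈ S^H_φ(ξ,p,s), ξ₂ ∈ S^H_φ(ξ₁,p₁,s) for some p₁ ∈ ∂_Hφ(ξ₁), and ξ₃ ∈ S^H_φ(ξ₂,p₂,s) for some p₂ ∈ ∂_Hφ(ξ₂), then ξ ∈ S^H_φ(ξ₁,p₁,K's), ξ₁ ∈ S^H_φ(ξ₂,p₂,K's), ξ₂ ∈ S^H_φ(ξ₃,q,K's) for all choices of subgradients. Then for every ξ₃ ∈ 𝔖^{ℍⁿ}_φ(ξ,p,s) and every q ∈ ∂_Hφ(ξ₃), one has ξ ∈ 𝔖^{ℍⁿ}_φ(ξ₃, q, K's). -/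
import Mathlib


noncomputable section

/-- A point of ℍⁿ. -/
abbrev Hp (n : ℕ) := (Fin n → ℝ) × (Fin n → ℝ) × ℝ

/-- A horizontal vector (an element of `V₁ ≅ ℝ^{2n}`). -/
abbrev Hv (n : ℕ) := (Fin n → ℝ) × (Fin n → ℝ)

variable {n : ℕ}

def ddot (a b : Fin n → ℝ) : ℝ := ∑ i, a i * b i

def pdot (p v : Hv n) : ℝ := ddot p.1 v.1 + ddot p.2 v.2

def vnorm (v : Hv n) : ℝ := Real.sqrt (∑ i, (v.1 i) ^ 2 + ∑ i, (v.2 i) ^ 2)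

def hmul (ξ η : Hp n) : Hp n :=
  (ξ.1 + η.1, ξ.2.1 + η.2.1, ξ.2.2 + η.2.2 + 2 * (ddot η.1 ξ.2.1 - ddot ξ.1 η.2.1))

def hinv (ξ : Hp n) : Hp n := (-ξ.1, -ξ.2.1, -ξ.2.2)

def hdil (l : ℝ) (ξ : Hp n) : Hp n := (l • ξ.1, l • ξ.2.1, l ^ 2 * ξ.2.2)

def hexp (v : Hv n) : Hp n := (v.1, v.2, 0)

def pr1 (ξ : Hp n) : Hv n := (ξ.1, ξ.2.1)

/-- The Korányi-Cygan gauge norm. -/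
def gaugeN (ξ : Hp n) : ℝ :=
  ((∑ i, (ξ.1 i) ^ 2 + ∑ i, (ξ.2.1 i) ^ 2) ^ 2 + ξ.2.2 ^ 2) ^ ((1 : ℝ) / 4)

/-- The gauge (Korányi-Cygan) distance `d_g(ξ,η) = N(η⁻¹∘ξ)`. -/
def dg (ξ η : Hp n) : ℝ := gaugeN (hmul (hinv η) ξ)

/-- The gauge ball `B_g(ξ₀,r)`. -/
def Bg (ξ₀ : Hp n) (r : ℝ) : Set (Hp n) := {ξ | dg ξ₀ ξ ≤ r}

/-- The horizontal plane at `ξ₀`. -/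
def Hplane (ξ₀ : Hp n) : Set (Hp n) :=
  {ξ | ξ.2.2 = ξ₀.2.2 + 2 * (ddot ξ.1 ξ₀.2.1 - ddot ξ₀.1 ξ.2.1)}

/-- H-convexity of `φ : ℍⁿ → ℝ`. -/
def HConvex (φ : Hp n → ℝ) : Prop :=
  ∀ ξ₁ ξ₂ : Hp n, ξ₂ ∈ Hplane ξ₁ → ∀ l ∈ Set.Icc (0 : ℝ) 1,
    φ (hmul ξ₁ (hdil l (hmul (hinv ξ₁) ξ₂))) ≤ (1 - l) * φ ξ₁ + l * φ ξ₂

/-- Strict H-convexity of `φ : ℍⁿ → ℝ`. -/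
def StrictHConvex (φ : Hp n → ℝ) : Prop :=
  ∀ ξ₁ ξ₂ : Hp n, ξ₂ ∈ Hplane ξ₁ → ξ₁ ≠ ξ₂ → ∀ l ∈ Set.Ioo (0 : ℝ) 1,
    φ (hmul ξ₁ (hdil l (hmul (hinv ξ₁) ξ₂))) < (1 - l) * φ ξ₁ + l * φ ξ₂

/-- The horizontal subdifferential `∂_H φ(ξ₀)`. -/
def HSubdiff (φ : Hp n → ℝ) (ξ₀ : Hp n) : Set (Hv n) :=
  {p | ∀ ξ ∈ Hplane ξ₀, φ ξ₀ + pdot p (pr1 ξ - pr1 ξ₀) ≤ φ ξ}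

/-- The horizontal section `S^H_φ(ξ₀,p₀,s)`. -/
def HSection (φ : Hp n → ℝ) (ξ₀ : Hp n) (p₀ : Hv n) (s : ℝ) : Set (Hp n) :=
  {ξ | ξ ∈ Hplane ξ₀ ∧ φ ξ - φ ξ₀ - pdot p₀ (pr1 ξ - pr1 ξ₀) < s}

/-- The horizontal sphere of radius `r` around `ξ` inside `H_ξ`. -/
def sphereH (ξ : Hp n) (r : ℝ) : Set (Hp n) := {ξ' | ξ' ∈ Hplane ξ ∧ dg ξ ξ' = r}

/-- `m^H_φ(ξ,r)`: min of the second-order horizontal increment over `sphereH ξ r`. -/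
def mH (φ : Hp n → ℝ) (G : Hp n → Hv n) (ξ : Hp n) (r : ℝ) : ℝ :=
  sInf ((fun ξ' => φ ξ' - φ ξ - pdot (G ξ) (pr1 ξ' - pr1 ξ)) '' sphereH ξ r)

/-- `M^H_φ(ξ,r)`: max of the second-order horizontal increment over `sphereH ξ r`. -/
def MH (φ : Hp n → ℝ) (G : Hp n → Hv n) (ξ : Hp n) (r : ℝ) : ℝ :=
  sSup ((fun ξ' => φ ξ' - φ ξ - pdot (G ξ) (pr1 ξ' - pr1 ξ)) '' sphereH ξ r)

/-- The full-dimensional ℍⁿ-section `𝔖^{ℍⁿ}_φ(ξ₀,p₀,s)`: three-fold union of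
horizontal sections. -/
def HnSection (φ : Hp n → ℝ) (ξ₀ : Hp n) (p₀ : Hv n) (s : ℝ) : Set (Hp n) :=
  {ξ₃ | ∃ (ξ₁ : Hp n) (p₁ : Hv n) (ξ₂ : Hp n) (p₂ : Hv n),
    ξ₁ ∈ HSection φ ξ₀ p₀ s ∧ p₁ ∈ HSubdiff φ ξ₁ ∧
    ξ₂ ∈ HSection φ ξ₁ p₁ s ∧ p₂ ∈ HSubdiff φ ξ₂ ∧
    ξ₃ ∈ HSection φ ξ₂ p₂ s}

/-- The set `B̃(ξ,r)` of points reachable from `ξ` by three horizontal steps of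
length at most `r`. -/
def Btilde (ξ : Hp n) (r : ℝ) : Set (Hp n) :=
  {η | ∃ v₁ v₂ v₃ : Hv n, vnorm v₁ ≤ r ∧ vnorm v₂ ≤ r ∧ vnorm v₃ ≤ r ∧
    η = hmul (hmul (hmul ξ (hexp v₁)) (hexp v₂)) (hexp v₃)}

/-- The two-point engulfing condition ◊ for horizontal sections implies the
condition ◆ for the full-dimensional ℍⁿ-sections. -/
theorem stmt16 {n : ℕ} (φ : Hp n → ℝ) (hφ : HConvex φ) (K' : ℝ) (hK' : 1 < K')
    (hdia : ∀ (ξ ξ' : Hp n) (p q : Hv n) (s : ℝ), 0 < s →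
      p ∈ HSubdiff φ ξ → q ∈ HSubdiff φ ξ' →
      ξ' ∈ HSection φ ξ p s → ξ ∈ HSection φ ξ' q (K' * s)) :
    ∀ (ξ : Hp n), ∀ p ∈ HSubdiff φ ξ, ∀ s : ℝ, 0 < s →
      ∀ ξ₃ ∈ HnSection φ ξ p s, ∀ q ∈ HSubdiff φ ξ₃,
        ξ ∈ HnSection φ ξ₃ q (K' * s) := by
  intro ξ p hp s hs ξ₃ h3 q hq
  obtain ⟨ξ₁, p₁, ξ₂, p₂, h1, hp1, h2, hp2, h3'⟩ := h3
  exact ⟨ξ₂, p₂, ξ₁, p₁, hdia ξ₂ ξ₃ p₂ q s hs hp2 hq h3',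
    hp2, hdia ξ₁ ξ₂ p₁ p₂ s hs hp1 hp2 h2, hp1, hdia ξ ξ₁ p p₁ s hs hp hp1 h1⟩
end
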